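/- Let n ≥ 2 and let J_n(x) = (h_{n,2}(x))^4 / C(n+1,2)^4 − h_{n,3}(x) · (h_{n,1}(x))^5 / (C(n+2,3) · n^5). If p is a point of the open simplex Δ_n° = {x ∈ (0,∞)^n : x_1+⋯+x_n = 1} at which J_n attains its minimum over Δ_n°, then the coordinates of p take at most two distinct values; i.e., the set {p_1,…,p_n} has cardinality at most 2. -/

import Mathlib

/-!
On the open simplex `h₁ = 1`, and `h₂`, `h₃` are polynomials in the power sums `∑ xᵢ²`, `∑ xᵢ³`.
Replacing two coordinates `pᵢ ≠ pⱼ` by `m ± u`, where `m` is their mean, keeps the point in the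
simplex and changes `h₂` by `δ = u² - ((pᵢ - pⱼ)/2)²` and `h₃` by `(1 + pᵢ + pⱼ) δ`. So along this
path `J_n` is an explicit function of `u` with a local minimum at `u = (pᵢ - pⱼ)/2 ≠ 0`, and
its vanishing derivative there shows that `pᵢ + pⱼ` is one and the same number for every pair of
distinct coordinate values. Three distinct values `a, b, c` would then give `a + b = a + c`.
-/

/-- The complete homogeneous symmetric polynomial `h_{n,k}`, as a function on `ℝ^n`:
the sum of all monomials of total degree `k` in `x 0, …, x (n-1)` (with `h_{n,0} = 1`). -/
noncomputable def hsym (n k : ℕ) (x : Fin n → ℝ) : ℝ :=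
  ∑ d ∈ Finset.Nat.antidiagonalTuple n k, ∏ i, x i ^ d i

/-- `J_n = H_{n,(2^4)} − H_{n,(3,1^5)}` as a function on `ℝ^n`. -/
noncomputable def Jfun (n : ℕ) (x : Fin n → ℝ) : ℝ :=
  (hsym n 2 x) ^ 4 / (((n + 1).choose 2 : ℝ)) ^ 4 -
    hsym n 3 x * (hsym n 1 x) ^ 5 / (((n + 2).choose 3 : ℝ) * (n : ℝ) ^ 5)

open Finset Function

lemma hsym_zero (n : ℕ) (x : Fin n → ℝ) : hsym n 0 x = 1 := by
  simp [hsym, Nat.antidiagonalTuple_zero_right]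

lemma hsym_nil (k : ℕ) (x : Fin 0 → ℝ) : hsym 0 (k + 1) x = 0 := by
  simp [hsym]

lemma hsym_succ (n k : ℕ) (x : Fin (n + 1) → ℝ) :
    hsym (n + 1) k x = ∑ a ∈ range (k + 1), x 0 ^ a * hsym n (k - a) (Fin.tail x) := by
  simp_rw [hsym, mul_sum]
  rw [sum_sigma']
  refine sum_nbij' (fun d => ⟨d 0, Fin.tail d⟩) (fun s => Fin.cons s.1 s.2) ?_ ?_ ?_ ?_ ?_
  · intro d hd
    rw [Nat.mem_antidiagonalTuple, Fin.sum_univ_succ] at hd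
    simp only [mem_sigma, mem_range, Nat.mem_antidiagonalTuple]
    exact ⟨by omega, by simp only [Fin.tail]; omega⟩
  · rintro ⟨a, e⟩ hs
    simp only [mem_sigma, mem_range, Nat.mem_antidiagonalTuple] at hs
    simp only [Nat.mem_antidiagonalTuple, Fin.sum_univ_succ, Fin.cons_zero, Fin.cons_succ]
    omega
  · intro d _
    exact Fin.cons_self_tail d
  · rintro ⟨a, e⟩ _
    simp
  · intro d _
    simp [Fin.prod_univ_succ, Fin.tail]

lemma hsym_one (n : ℕ) (x : Fin n → ℝ) : hsym n 1 x = ∑ i, x i := by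
  induction n with
  | zero => simpa using hsym_nil 0 x
  | succ n ih =>
    simp [hsym_succ, Fin.sum_univ_succ, sum_range_succ, hsym_zero, ih, Fin.tail, add_comm]

lemma hsym_two (n : ℕ) (x : Fin n → ℝ) :
    hsym n 2 x = ((∑ i, x i) ^ 2 + ∑ i, x i ^ 2) / 2 := by
  induction n with
  | zero => simpa using hsym_nil 1 x
  | succ n ih =>
    simp only [hsym_succ, Fin.sum_univ_succ, sum_range_succ, sum_range_zero, hsym_zero,
      hsym_one, ih, Fin.tail, Nat.reduceSub]
    ring

lemma hsym_three (n : ℕ) (x : Fin n → ℝ) :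
    hsym n 3 x = ((∑ i, x i) ^ 3 + 3 * (∑ i, x i) * (∑ i, x i ^ 2) + 2 * ∑ i, x i ^ 3) / 6 := by
  induction n with
  | zero => simpa using hsym_nil 2 x
  | succ n ih =>
    simp only [hsym_succ, Fin.sum_univ_succ, sum_range_succ, sum_range_zero, hsym_zero,
      hsym_one, hsym_two, ih, Fin.tail, Nat.reduceSub]
    ring

lemma Fintype.sum_apply_update_update {ι M : Type*} [Fintype ι] [DecidableEq ι] [AddCommGroup M]
    {α : Type*} (f : α → M) (p : ι → α) {i j : ι} (hij : i ≠ j) (a b : α) :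
    ∑ l, f (update (update p i a) j b l) = ∑ l, f (p l) - f (p i) - f (p j) + f a + f b := by
  have hdiff : ∑ l, (f (update (update p i a) j b l) - f (p l)) =
      (f a - f (p i)) + (f b - f (p j)) := by
    rw [Fintype.sum_eq_add i j hij]
    · simp [update_of_ne hij]
    · rintro l ⟨hli, hlj⟩
      simp [update_of_ne hli, update_of_ne hlj]
  rw [sum_sub_distrib, sub_eq_iff_eq_add] at hdiff
  rw [hdiff]
  abel

def openSimplex (n : ℕ) : Set (Fin n → ℝ) := {x | (∀ i, 0 < x i) ∧ ∑ i, x i = 1}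

noncomputable def spreadPair {n : ℕ} (p : Fin n → ℝ) (i j : Fin n) (u : ℝ) : Fin n → ℝ :=
  update (update p i ((p i + p j) / 2 + u)) j ((p i + p j) / 2 - u)

section spreadPair

variable {n : ℕ} (p : Fin n → ℝ) {i j : Fin n} (u : ℝ)

lemma sum_pow_spreadPair (hij : i ≠ j) (k : ℕ) :
    ∑ l, spreadPair p i j u l ^ k = ∑ l, p l ^ k - p i ^ k - p j ^ k
      + ((p i + p j) / 2 + u) ^ k + ((p i + p j) / 2 - u) ^ k :=
  Fintype.sum_apply_update_update (· ^ k) p hij _ _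

lemma sum_spreadPair (hij : i ≠ j) : ∑ l, spreadPair p i j u l = ∑ l, p l := by
  have h := sum_pow_spreadPair p u hij 1
  simp only [pow_one] at h
  rw [h]
  ring

lemma hsym_two_spreadPair (hij : i ≠ j) :
    hsym n 2 (spreadPair p i j u) = hsym n 2 p + (u ^ 2 - ((p i - p j) / 2) ^ 2) := by
  rw [hsym_two, hsym_two, sum_spreadPair p u hij, sum_pow_spreadPair p u hij]
  ring

lemma hsym_three_spreadPair (hij : i ≠ j) :
    hsym n 3 (spreadPair p i j u) =
      hsym n 3 p + (∑ l, p l + p i + p j) * (u ^ 2 - ((p i - p j) / 2) ^ 2) := by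
  rw [hsym_three, hsym_three, sum_spreadPair p u hij, sum_pow_spreadPair p u hij,
    sum_pow_spreadPair p u hij]
  ring

lemma spreadPair_mem_openSimplex (hij : i ≠ j) (hp : p ∈ openSimplex n)
    (hu : |u| < (p i + p j) / 2) :
    spreadPair p i j u ∈ openSimplex n := by
  refine ⟨fun l => ?_, (sum_spreadPair p u hij).trans hp.2⟩
  obtain ⟨hu₁, hu₂⟩ := abs_lt.1 hu
  rcases eq_or_ne l j with rfl | hlj
  · simp only [spreadPair, update_self]; linarith
  rw [spreadPair, update_of_ne hlj]
  rcases eq_or_ne l i with rfl | hli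
  · simp only [update_self]; linarith
  rw [update_of_ne hli]
  exact hp.1 l

lemma Jfun_spreadPair (hij : i ≠ j) (hp : ∑ l, p l = 1) :
    Jfun n (spreadPair p i j u) =
      (hsym n 2 p + (u ^ 2 - ((p i - p j) / 2) ^ 2)) ^ 4 / ((n + 1).choose 2 : ℝ) ^ 4 -
        (hsym n 3 p + (1 + p i + p j) * (u ^ 2 - ((p i - p j) / 2) ^ 2)) /
          (((n + 2).choose 3 : ℝ) * (n : ℝ) ^ 5) := by
  rw [Jfun, hsym_two_spreadPair p u hij, hsym_three_spreadPair p u hij, hsym_one,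
    sum_spreadPair p u hij, hp, one_pow, mul_one]

end spreadPair

theorem IsMinOn.add_eq_of_ne {n : ℕ} {p : Fin n → ℝ} (hmin : IsMinOn (Jfun n) (openSimplex n) p)
    (hp : p ∈ openSimplex n) {i j : Fin n} (hpij : p i ≠ p j) :
    p i + p j = 4 * (((n + 2).choose 3 : ℝ) * (n : ℝ) ^ 5) * hsym n 2 p ^ 3
      / ((n + 1).choose 2 : ℝ) ^ 4 - 1 := by
  have hij : i ≠ j := fun h => hpij (congrArg p h)
  set c : ℝ := ((n + 1).choose 2 : ℝ) ^ 4
  set d : ℝ := ((n + 2).choose 3 : ℝ) * (n : ℝ) ^ 5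
  set K := hsym n 2 p
  set u₀ := (p i - p j) / 2 with hu₀_def
  let Ψ : ℝ → ℝ := fun u =>
    (K + (u ^ 2 - u₀ ^ 2)) ^ 4 / c - (hsym n 3 p + (1 + p i + p j) * (u ^ 2 - u₀ ^ 2)) / d
  have hΨ_le : ∀ u, |u| < (p i + p j) / 2 → Ψ u₀ ≤ Ψ u := by
    intro u hu
    have hJ := hmin (spreadPair_mem_openSimplex p u hij hp hu)
    rw [Set.mem_ofPred_eq, Jfun_spreadPair p u hij hp.2, Jfun, hsym_one, hp.2] at hJ
    simpa [Ψ] using hJ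
  have hu₀ : |u₀| < (p i + p j) / 2 := by
    have := hp.1 i
    have := hp.1 j
    exact abs_lt.2 ⟨by linarith [hu₀_def], by linarith [hu₀_def]⟩
  have hloc : IsLocalMin Ψ u₀ := by
    filter_upwards [(isOpen_lt continuous_abs continuous_const).mem_nhds hu₀] with u hu
    exact hΨ_le u hu
  have hderiv : HasDerivAt Ψ (2 * u₀ * (4 * K ^ 3 / c - (1 + p i + p j) / d)) u₀ := by
    have hδ : HasDerivAt (fun u : ℝ => u ^ 2 - u₀ ^ 2) (2 * u₀) u₀ := by
      simpa using (hasDerivAt_pow 2 u₀).sub_const (u₀ ^ 2)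
    refine ((((hδ.const_add K).pow 4).div_const c).sub
      (((hδ.const_mul (1 + p i + p j)).const_add (hsym n 3 p)).div_const d)).congr_deriv ?_
    simp only [sub_self, add_zero]
    ring
  have hn : 0 < n := i.pos
  have hc : c ≠ 0 := pow_ne_zero _ (Nat.cast_ne_zero.2 (Nat.choose_pos (by omega)).ne')
  have hd : d ≠ 0 :=
    mul_ne_zero (Nat.cast_ne_zero.2 (Nat.choose_pos (by omega)).ne') (by positivity)
  have hu₀ne : u₀ ≠ 0 := fun h => hpij (by linarith [hu₀_def])
  have hcrit := hloc.hasDerivAt_eq_zero hderiv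
  rw [mul_eq_zero, or_iff_right (mul_ne_zero two_ne_zero hu₀ne), sub_eq_zero,
    div_eq_div_iff hc hd] at hcrit
  field_simp
  linarith

theorem minimizer_has_at_most_two_values_general
    (n : ℕ) (p : Fin n → ℝ) (hp_pos : ∀ i, 0 < p i) (hp_sum : ∑ i, p i = 1)
    (hmin : ∀ x : Fin n → ℝ, (∀ i, 0 < x i) → ∑ i, x i = 1 → Jfun n p ≤ Jfun n x) :
    (Finset.univ.image p).card ≤ 2 := by
  have hp : p ∈ openSimplex n := ⟨hp_pos, hp_sum⟩
  have hmin' : IsMinOn (Jfun n) (openSimplex n) p := fun x hx => hmin x hx.1 hx.2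
  by_contra! hcard
  obtain ⟨_, hi, _, hj, _, hk, hij, hik, hjk⟩ := two_lt_card.1 hcard
  obtain ⟨i, -, rfl⟩ := mem_image.1 hi
  obtain ⟨j, -, rfl⟩ := mem_image.1 hj
  obtain ⟨k, -, rfl⟩ := mem_image.1 hk
  have hsum_ij := hmin'.add_eq_of_ne hp hij
  have hsum_ik := hmin'.add_eq_of_ne hp hik
  exact hjk (by linarith)

/-- If `p` minimizes `J_n` over the open simplex
`Δ_n° = {x ∈ (0,∞)^n : x_1+⋯+x_n = 1}` (with `n ≥ 2`), then the coordinates of `p`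
take at most two distinct values. -/
theorem minimizer_has_at_most_two_values (n : ℕ) (hn : 2 ≤ n)
    (p : Fin n → ℝ) (hp_pos : ∀ i, 0 < p i) (hp_sum : ∑ i, p i = 1)
    (hmin : ∀ x : Fin n → ℝ, (∀ i, 0 < x i) → ∑ i, x i = 1 → Jfun n p ≤ Jfun n x) :
    (Finset.univ.image p).card ≤ 2 :=
  minimizer_has_at_most_two_values_general n p hp_pos hp_sum hmin
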